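/- arXiv:1506.02298 — 2 statements merged into one kernel-verified Lean document; each statement's English description precedes it below -/
import Mathlib

section
/- In Kingman's model, for each 0 < a ≤ 1 let p^{a,*} denote the total-variation limit of the sequence started from δ_a with mutant distribution q^a (these limits exist). Then p^{a,*} converges weakly to p^{1,*} as a tends to 1 from the left. -/
open MeasureTheory Set Filter

/-- Kingman's iteration: `p_i(dx) = (1-β) x p_{i-1}(dx) / ∫ y p_{i-1}(dy) + β q(dx)`,
with the convention `p_i = (1-β) p_{i-1} + β q` when `p_{i-1} = δ₀`
(i.e. when `∫ y p_{i-1}(dy) = 0`, in which case the density below is `1`). -/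
noncomputable def kingman (β : ℝ) (q p₀ : MeasureTheory.Measure ℝ) :
    ℕ → MeasureTheory.Measure ℝ
  | 0 => p₀
  | i + 1 =>
      ENNReal.ofReal (1 - β) •
          ((kingman β q p₀ i).withDensity fun x =>
            ENNReal.ofReal
              (if 0 < ∫ y, y ∂(kingman β q p₀ i) then x / ∫ y, y ∂(kingman β q p₀ i)
               else 1))
        + ENNReal.ofReal β • q

/-- Convergence in total variation (uniform convergence over all measurable sets). -/
def TendstoTV (p : ℕ → MeasureTheory.Measure ℝ) (μ : MeasureTheory.Measure ℝ) : Prop :=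
  ∀ ε : ℝ, 0 < ε → ∃ N : ℕ, ∀ i ≥ N, ∀ A : Set ℝ, MeasurableSet A →
    |((p i) A).toReal - (μ A).toReal| < ε

/-- Weak convergence of measures (tested against bounded continuous functions). -/
def TendstoWeak (p : ℕ → MeasureTheory.Measure ℝ) (μ : MeasureTheory.Measure ℝ) : Prop :=
  ∀ f : BoundedContinuousFunction ℝ ℝ,
    Filter.Tendsto (fun i => ∫ x, f x ∂(p i)) Filter.atTop (nhds (∫ x, f x ∂μ))

/-- The supremum `m_u` of the (closed) support of a probability measure `u` on `[0,1]`: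
the smallest `x` with no mass strictly above it. -/
noncomputable def msupp (u : MeasureTheory.Measure ℝ) : ℝ :=
  sInf {x : ℝ | u (Set.Ioi x) = 0}

/-- `h^a`: the pushforward of `h` under `x ↦ min x a`, i.e. `h` on `[0,a)` plus
`h([a,∞))·δ_a`. -/
noncomputable def trunc (a : ℝ) (h : MeasureTheory.Measure ℝ) : MeasureTheory.Measure ℝ :=
  MeasureTheory.Measure.map (fun x => min x a) h

/-!
Write `ν_a = p^{a,*}` and `Y_a = m_a / (1 - β)` with `m_a` the mean of `ν_a`. Letting `i → ∞` in
the recursion (total variation convergence carries the means along) gives the fixed-point equation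
`ν_a = (x / Y_a) ν_a + β q^a`, and the atom at `a` of the iterates forces `Y_a ≥ a`. Iterating the
equation, `ν_a = β ψ_{Y_a} q^a + ν_a{Y_a} δ_{Y_a}` with `ψ_Y(x) = (1 - x / Y)⁻¹`, and the atom can
only sit at `Y_a = a`. Hence `β ∫ ψ_{Y_a} dq^a ≤ 1`, with equality unless `Y_a = a`; since
`∫ ψ_y dq^a` increases with `a` and strictly decreases in `y ≥ 1`, this forces `Y_a → Y_1` as
`a → 1⁻`. Finally `∫ f dν_a = f(Y_a) + β ∫ ψ_{Y_a}(x ∧ a) (f(x ∧ a) - f(Y_a)) dq(x)`: below a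
point `c < Y_1` the integrands are uniformly bounded and converge pointwise, while on `(c, 1]`
they are small against `ψ`, whose integral stays below `1 / β`.
-/

open scoped ENNReal Topology BoundedContinuousFunction

namespace Kingman

section SupportedMeasure

variable {μ : Measure ℝ} {a : ℝ}

theorem ae_mem_Icc (hμ : μ (Icc 0 a)ᶜ = 0) : ∀ᵐ x ∂μ, x ∈ Icc 0 a :=
  mem_ae_iff.2 hμ

theorem lintegral_ofReal_le (hμ : μ (Icc 0 a)ᶜ = 0) :
    ∫⁻ x, ENNReal.ofReal x ∂μ ≤ ENNReal.ofReal a * μ univ := by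
  rw [← lintegral_const]
  exact lintegral_mono_ae <| (ae_mem_Icc hμ).mono fun x hx => ENNReal.ofReal_le_ofReal hx.2

theorem lintegral_ofReal_ne_top [IsFiniteMeasure μ] (hμ : μ (Icc 0 a)ᶜ = 0) :
    ∫⁻ x, ENNReal.ofReal x ∂μ ≠ ∞ :=
  ((lintegral_ofReal_le hμ).trans_lt (ENNReal.mul_lt_top ENNReal.ofReal_lt_top
    (measure_lt_top μ univ))).ne

theorem integral_id_eq_toReal (hμ : μ (Icc 0 a)ᶜ = 0) :
    ∫ x, x ∂μ = (∫⁻ x, ENNReal.ofReal x ∂μ).toReal :=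
  integral_eq_lintegral_of_nonneg_ae ((ae_mem_Icc hμ).mono fun _ hx => hx.1)
    aestronglyMeasurable_id

theorem ofReal_integral_id [IsFiniteMeasure μ] (hμ : μ (Icc 0 a)ᶜ = 0) :
    ENNReal.ofReal (∫ x, x ∂μ) = ∫⁻ x, ENNReal.ofReal x ∂μ := by
  rw [integral_id_eq_toReal hμ, ENNReal.ofReal_toReal (lintegral_ofReal_ne_top hμ)]

theorem integral_id_pos [IsFiniteMeasure μ] (hμ : μ (Icc 0 a)ᶜ = 0) (ha : 0 < a)
    (hμa : μ {a} ≠ 0) : 0 < ∫ x, x ∂μ := by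
  rw [← ENNReal.ofReal_pos, ofReal_integral_id hμ]
  calc 0 < ENNReal.ofReal a * μ {a} := ENNReal.mul_pos (ENNReal.ofReal_pos.2 ha).ne' hμa
    _ = ∫⁻ x in {a}, ENNReal.ofReal x ∂μ := (lintegral_singleton _ a).symm
    _ ≤ ∫⁻ x, ENNReal.ofReal x ∂μ := setLIntegral_le_lintegral _ _

theorem setLIntegral_ofReal_eq_lintegral_measure_Ioi (hμ : μ (Icc 0 1)ᶜ = 0) (A : Set ℝ) :
    ∫⁻ x in A, ENNReal.ofReal x ∂μ = ∫⁻ t in Ioc 0 1, μ (Ioi t ∩ A) := by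
  have hpos : 0 ≤ᵐ[μ.restrict A] fun x => x :=
    ae_restrict_of_ae ((ae_mem_Icc hμ).mono fun _ hx => hx.1)
  have hvanish : ∀ t ∈ Ioi (1 : ℝ), μ (Ioi t ∩ A) = 0 := fun t ht =>
    measure_mono_null (fun x (hx : x ∈ Ioi t ∩ A) (hx01 : x ∈ Icc (0 : ℝ) 1) =>
      (hx01.2.trans_lt (lt_trans ht hx.1)).false) hμ
  rw [lintegral_eq_lintegral_meas_lt (f := fun x => x) _ hpos aemeasurable_id]
  have hset (t : ℝ) : μ.restrict A {x | t < x} = μ (Ioi t ∩ A) :=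
    Measure.restrict_apply measurableSet_Ioi
  simp only [hset]
  rw [← Ioc_union_Ioi_eq_Ioi zero_le_one,
    lintegral_union measurableSet_Ioi (Ioc_disjoint_Ioi le_rfl),
    setLIntegral_congr_fun measurableSet_Ioi hvanish]
  simp

end SupportedMeasure

section TotalVariation

variable {p : ℕ → Measure ℝ} {ν : Measure ℝ}

theorem _root_.TendstoTV.tendsto_toReal_apply (h : TendstoTV p ν) {A : Set ℝ}
    (hA : MeasurableSet A) :
    Tendsto (fun i => (p i A).toReal) atTop (𝓝 (ν A).toReal) :=
  Metric.tendsto_atTop.2 fun ε hε => (h ε hε).imp fun _ hN i hi => hN i hi A hA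

theorem _root_.TendstoTV.tendsto_apply [∀ i, IsFiniteMeasure (p i)] [IsFiniteMeasure ν]
    (h : TendstoTV p ν) {A : Set ℝ} (hA : MeasurableSet A) :
    Tendsto (fun i => p i A) atTop (𝓝 (ν A)) :=
  (ENNReal.tendsto_toReal_iff (fun _ => measure_ne_top _ _) (measure_ne_top _ _)).1
    (h.tendsto_toReal_apply hA)

theorem _root_.TendstoTV.isProbabilityMeasure [∀ i, IsProbabilityMeasure (p i)]
    (h : TendstoTV p ν) : IsProbabilityMeasure ν := by
  have h1 := h.tendsto_toReal_apply MeasurableSet.univ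
  simp only [measure_univ, ENNReal.toReal_one] at h1
  exact ⟨(ENNReal.toReal_eq_one_iff _).1 (tendsto_nhds_unique h1 tendsto_const_nhds)⟩

theorem _root_.TendstoTV.measure_eq_zero [IsFiniteMeasure ν] (h : TendstoTV p ν) {A : Set ℝ}
    (hA : MeasurableSet A) (hpA : ∀ i, p i A = 0) : ν A = 0 := by
  have h0 := h.tendsto_toReal_apply hA
  simp only [hpA, ENNReal.toReal_zero] at h0
  exact ((ENNReal.toReal_eq_zero_iff _).1 (tendsto_nhds_unique h0 tendsto_const_nhds)).resolve_right
    (measure_ne_top ν A)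

theorem _root_.TendstoTV.tendsto_setLIntegral_ofReal [∀ i, IsProbabilityMeasure (p i)]
    (h : TendstoTV p ν) (hp : ∀ i, p i (Icc 0 1)ᶜ = 0) (hν : ν (Icc 0 1)ᶜ = 0)
    {A : Set ℝ} (hA : MeasurableSet A) :
    Tendsto (fun i => ∫⁻ x in A, ENNReal.ofReal x ∂p i) atTop
      (𝓝 (∫⁻ x in A, ENNReal.ofReal x ∂ν)) := by
  have := h.isProbabilityMeasure
  simp only [setLIntegral_ofReal_eq_lintegral_measure_Ioi (hp _),
    setLIntegral_ofReal_eq_lintegral_measure_Ioi hν]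
  refine tendsto_lintegral_of_dominated_convergence 1 (fun i => ?_)
    (fun i => ae_of_all _ fun t => prob_le_one) (by simp [Real.volume_Ioc])
    (ae_of_all _ fun t => h.tendsto_apply (measurableSet_Ioi.inter hA))
  exact Antitone.measurable fun s t hst =>
    measure_mono (inter_subset_inter_left _ (Ioi_subset_Ioi hst))

end TotalVariation

/-- The total weight `∑ₙ (x / y) ^ n` that a mutant of fitness `x` accumulates over all later
generations when the mean fitness is `(1 - β) y`. -/
noncomputable def psi (y x : ℝ) : ℝ≥0∞ := (1 - ENNReal.ofReal (x / y))⁻¹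

theorem psi_eq_tsum (y x : ℝ) : psi y x = ∑' n, ENNReal.ofReal (x / y) ^ n :=
  (ENNReal.tsum_geometric _).symm

theorem measurable_psi (y : ℝ) : Measurable (psi y) := by
  unfold psi; fun_prop

theorem _root_.Filter.Tendsto.psi {ι : Type*} {l : Filter ι} {y x : ι → ℝ} {y₀ x₀ : ℝ}
    (hy : Tendsto y l (𝓝 y₀)) (hx : Tendsto x l (𝓝 x₀)) (hy₀ : y₀ ≠ 0) :
    Tendsto (fun i => psi (y i) (x i)) l (𝓝 (psi y₀ x₀)) :=
  tendsto_inv_iff.2 <| ENNReal.Tendsto.sub tendsto_const_nhds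
    (ENNReal.tendsto_ofReal (hx.div hy hy₀)) (Or.inl ENNReal.one_ne_top)

theorem psi_zero (y : ℝ) : psi y 0 = 1 := by
  simp [psi]

theorem psi_monotone {y : ℝ} (hy : 0 < y) : Monotone (psi y) := fun _ _ hxx' =>
  ENNReal.inv_le_inv.2 <| tsub_le_tsub_left (ENNReal.ofReal_le_ofReal (by gcongr)) _

theorem psi_le_psi_of_le_left {x y y' : ℝ} (hx : 0 ≤ x) (hy : 0 < y) (hyy' : y ≤ y') :
    psi y' x ≤ psi y x :=
  ENNReal.inv_le_inv.2 <| tsub_le_tsub_left (ENNReal.ofReal_le_ofReal (by gcongr)) _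

theorem psi_eq_ofReal {x y : ℝ} (hx : 0 ≤ x) (hxy : x < y) :
    psi y x = ENNReal.ofReal (1 - x / y)⁻¹ := by
  have hy : 0 < y := hx.trans_lt hxy
  have : 0 < 1 - x / y := sub_pos.2 ((div_lt_one hy).2 hxy)
  rw [psi, ← ENNReal.ofReal_one, ← ENNReal.ofReal_sub _ (div_nonneg hx hy.le),
    ENNReal.ofReal_inv_of_pos this]

theorem psi_ne_top {x y : ℝ} (hx : 0 ≤ x) (hxy : x < y) : psi y x ≠ ∞ := by
  rw [psi_eq_ofReal hx hxy]; exact ENNReal.ofReal_ne_top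

theorem psi_eq_top {x y : ℝ} (hy : 0 < y) (hyx : y ≤ x) : psi y x = ∞ := by
  rw [psi, ENNReal.inv_eq_top, tsub_eq_zero_iff_le, ← ENNReal.ofReal_one]
  exact ENNReal.ofReal_le_ofReal ((one_le_div hy).2 hyx)

theorem psi_toReal {x y : ℝ} (hx : 0 ≤ x) (hxy : x < y) :
    (psi y x).toReal = (1 - x / y)⁻¹ := by
  rw [psi_eq_ofReal hx hxy, ENNReal.toReal_ofReal]
  exact inv_nonneg.2 (sub_nonneg.2 ((div_le_one (hx.trans_lt hxy)).2 hxy.le))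

theorem psi_toReal_le {x y c t : ℝ} (hx : 0 ≤ x) (hxc : x ≤ c) (hct : c < t) (hty : t ≤ y) :
    (psi y x).toReal ≤ (1 - c / t)⁻¹ := by
  have ht : 0 < t := (hx.trans hxc).trans_lt hct
  rw [psi_toReal hx (hxc.trans_lt (hct.trans_le hty))]
  have hx_div : x / y ≤ c / t := div_le_div₀ (hx.trans hxc) hxc ht hty
  exact inv_anti₀ (sub_pos.2 ((div_lt_one ht).2 hct)) (by linarith)

theorem psi_lt_psi_of_lt_left {x u t : ℝ} (hx : 0 < x) (hu : 0 < u) (hut : u < t)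
    (ht : psi t x ≠ ∞) : psi t x < psi u x := by
  rcases lt_or_ge x u with hxu | hux
  · rw [psi_eq_ofReal hx.le hxu, psi_eq_ofReal hx.le (hxu.trans hut)]
    have hpos : 0 < 1 - x / u := sub_pos.2 ((div_lt_one hu).2 hxu)
    have : x / t < x / u := div_lt_div_of_pos_left hx hu hut
    exact ENNReal.ofReal_lt_ofReal_iff'.2 ⟨inv_strictAnti₀ hpos (by linarith), inv_pos.2 hpos⟩
  · rw [psi_eq_top hu hux]; exact ht.lt_top

theorem kingman_succ_apply {β : ℝ} {Q p₀ : Measure ℝ} {i : ℕ}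
    (hm : 0 < ∫ y, y ∂kingman β Q p₀ i) {A : Set ℝ} (hA : MeasurableSet A) :
    kingman β Q p₀ (i + 1) A = ENNReal.ofReal ((1 - β) / ∫ y, y ∂kingman β Q p₀ i) *
        ∫⁻ x in A, ENNReal.ofReal x ∂kingman β Q p₀ i + ENNReal.ofReal β * Q A := by
  rw [kingman, Measure.add_apply, Measure.smul_apply, Measure.smul_apply, smul_eq_mul,
    smul_eq_mul, withDensity_apply _ hA, ← lintegral_const_mul' _ _ ENNReal.ofReal_ne_top,
    ← lintegral_const_mul _ ENNReal.measurable_ofReal]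
  simp only [if_pos hm]
  congr 2 with x
  rcases le_total 0 x with hx | hx
  · rw [← ENNReal.ofReal_mul' (div_nonneg hx hm.le), ← ENNReal.ofReal_mul' hx]
    ring_nf
  · simp [ENNReal.ofReal_of_nonpos hx,
      ENNReal.ofReal_of_nonpos (div_nonpos_of_nonpos_of_nonneg hx hm.le)]

section Iterates

variable {β a : ℝ} {Q : Measure ℝ}

theorem kingman_dirac_spec (hβ : β ∈ Ioo 0 1) (ha : 0 < a) [IsProbabilityMeasure Q]
    (hQ : Q (Icc 0 a)ᶜ = 0) (i : ℕ) :
    IsProbabilityMeasure (kingman β Q (Measure.dirac a) i) ∧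
      kingman β Q (Measure.dirac a) i (Icc 0 a)ᶜ = 0 ∧ kingman β Q (Measure.dirac a) i {a} ≠ 0 := by
  induction i with
  | zero => exact ⟨by rw [kingman]; infer_instance, by simp [kingman, ha.le]⟩
  | succ i ih =>
    obtain ⟨hprob, hsupp, hatom⟩ := ih
    have hm := integral_id_pos hsupp ha hatom
    have hβ' : 0 < (1 - β) / ∫ y, y ∂kingman β Q (Measure.dirac a) i := div_pos (sub_pos.2 hβ.2) hm
    refine ⟨⟨?_⟩, ?_, ?_⟩
    · rw [kingman_succ_apply hm MeasurableSet.univ, Measure.restrict_univ,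
        ← ofReal_integral_id hsupp, ← ENNReal.ofReal_mul hβ'.le, div_mul_cancel₀ _ hm.ne',
        measure_univ, mul_one, ← ENNReal.ofReal_add (sub_pos.2 hβ.2).le hβ.1.le, sub_add_cancel,
        ENNReal.ofReal_one]
    · rw [kingman_succ_apply hm measurableSet_Icc.compl, setLIntegral_measure_zero _ _ hsupp, hQ]
      simp
    · rw [kingman_succ_apply hm (measurableSet_singleton a), lintegral_singleton]
      refine fun h => mul_ne_zero (ENNReal.ofReal_pos.2 hβ').ne' ?_ (add_eq_zero.1 h).1
      exact mul_ne_zero (ENNReal.ofReal_pos.2 ha).ne' hatom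

end Iterates

section FixedPoint

variable {ν Q : Measure ℝ} {Y : ℝ} {c : ℝ≥0∞}

theorem setLIntegral_eq_of_fixedPoint
    (hfix : ν = ν.withDensity (fun x => ENNReal.ofReal (x / Y)) + c • Q)
    {f : ℝ → ℝ≥0∞} (hf : Measurable f) {A : Set ℝ} (hA : MeasurableSet A) :
    ∫⁻ x in A, f x ∂ν = ∫⁻ x in A, ENNReal.ofReal (x / Y) * f x ∂ν + c * ∫⁻ x in A, f x ∂Q := by
  nth_rewrite 1 [hfix]
  rw [Measure.restrict_add, lintegral_add_measure, restrict_withDensity hA,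
    lintegral_withDensity_eq_lintegral_mul _ (by fun_prop) hf, Measure.restrict_smul,
    lintegral_smul_measure, smul_eq_mul]
  rfl

theorem measure_Ioi_eq_zero_of_fixedPoint [IsFiniteMeasure ν] (hY : 0 < Y)
    (hfix : ν = ν.withDensity (fun x => ENNReal.ofReal (x / Y)) + c • Q) :
    ν (Ioi Y) = 0 := by
  have h := setLIntegral_eq_of_fixedPoint hfix measurable_const (measurableSet_Ioi (a := Y))
    (f := 1)
  simp only [Pi.one_apply, mul_one, setLIntegral_one] at h
  have hle : ∀ᵐ x ∂ν.restrict (Ioi Y), (1 : ℝ≥0∞) ≤ ENNReal.ofReal (x / Y) :=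
    ae_restrict_of_forall_mem measurableSet_Ioi fun x hx => by
      rw [← ENNReal.ofReal_one]; exact ENNReal.ofReal_le_ofReal ((one_le_div hY).2 hx.le)
  have heq := ae_eq_of_ae_le_of_lintegral_le hle (by simp) (by fun_prop) <| by
    rw [setLIntegral_one, h]; exact le_self_add
  have hfalse : ∀ᵐ x ∂ν.restrict (Ioi Y), False := by
    filter_upwards [heq, ae_restrict_mem measurableSet_Ioi] with x hx hxY
    rw [← ENNReal.ofReal_one] at hx
    exact ((one_lt_div hY).2 hxY).ne ((ENNReal.ofReal_eq_ofReal_iff zero_le_one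
      (div_nonneg (hY.le.trans hxY.le) hY.le)).1 hx)
  exact Measure.restrict_eq_zero.1 (ae_eq_bot.1 (eventually_false_iff_eq_bot.1 hfalse))

theorem mul_measure_Ici_eq_zero_of_fixedPoint [IsFiniteMeasure ν] (hY : 0 < Y)
    (hfix : ν = ν.withDensity (fun x => ENNReal.ofReal (x / Y)) + c • Q) :
    c * Q (Ici Y) = 0 := by
  have h := setLIntegral_eq_of_fixedPoint hfix measurable_const (measurableSet_Ici (a := Y))
    (f := 1)
  have hIoi := measure_Ioi_eq_zero_of_fixedPoint hY hfix
  simp only [Pi.one_apply, mul_one, setLIntegral_one] at h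
  have hdisj : Disjoint {Y} (Ioi Y) := disjoint_singleton_left.2 (lt_irrefl Y)
  have hν : ν (Ici Y) = ν {Y} := by
    rw [← Ioi_insert, insert_eq, measure_union hdisj measurableSet_Ioi, hIoi, add_zero]
  have hw : ∫⁻ x in Ici Y, ENNReal.ofReal (x / Y) ∂ν = ν {Y} := by
    rw [← Ioi_insert, insert_eq, lintegral_union measurableSet_Ioi hdisj,
      setLIntegral_measure_zero _ _ hIoi, lintegral_singleton, div_self hY.ne',
      ENNReal.ofReal_one, one_mul, add_zero]
  rw [hν, hw] at h
  exact (ENNReal.add_right_inj (measure_ne_top ν {Y})).1 (by rw [add_zero]; exact h.symm)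

theorem eq_withDensity_psi_add_dirac_of_fixedPoint [IsFiniteMeasure ν] (hY : 0 < Y)
    (hfix : ν = ν.withDensity (fun x => ENNReal.ofReal (x / Y)) + c • Q) :
    ν = (c • Q).withDensity (psi Y) + ν {Y} • Measure.dirac Y := by
  ext A hA
  have hw : Measurable fun x : ℝ => ENNReal.ofReal (x / Y) := by fun_prop
  have hexpand (n : ℕ) : ν A = ∑ j ∈ Finset.range n, c * ∫⁻ x in A, ENNReal.ofReal (x / Y) ^ j ∂Q +
      ∫⁻ x in A, ENNReal.ofReal (x / Y) ^ n ∂ν := by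
    induction n with
    | zero => simp
    | succ n ih =>
      rw [ih, setLIntegral_eq_of_fixedPoint hfix (hw.pow_const n) hA, Finset.sum_range_succ]
      simp only [← pow_succ']
      ring
  have hgeom : Tendsto (fun n => ∑ j ∈ Finset.range n, c * ∫⁻ x in A, ENNReal.ofReal (x / Y) ^ j ∂Q)
      atTop (𝓝 (c * ∫⁻ x in A, psi Y x ∂Q)) := by
    simp_rw [psi_eq_tsum, lintegral_tsum fun j => (hw.pow_const j).aemeasurable,
      ← ENNReal.tsum_mul_left]
    exact ENNReal.tendsto_nat_tsum _
  have hle : ∀ᵐ x ∂ν.restrict A, x ≤ Y := ae_restrict_of_ae <|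
    (measure_eq_zero_iff_ae_notMem.1 (measure_Ioi_eq_zero_of_fixedPoint hY hfix)).mono
      fun _ hx => not_lt.1 hx
  have hatom : Tendsto (fun n => ∫⁻ x in A, ENNReal.ofReal (x / Y) ^ n ∂ν) atTop
      (𝓝 (ν ({Y} ∩ A))) := by
    rw [← Measure.restrict_apply (measurableSet_singleton Y), ← lintegral_indicator_one
      (measurableSet_singleton Y)]
    refine tendsto_lintegral_of_dominated_convergence 1 (fun n => hw.pow_const n)
      (fun n => hle.mono fun x hx => pow_le_one' ?_ n) (by simp) (hle.mono fun x hx => ?_)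
    · exact ENNReal.ofReal_le_one.2 ((div_le_one hY).2 hx)
    rcases hx.lt_or_eq with hx | rfl
    · rw [indicator_of_notMem (show x ∉ ({Y} : Set ℝ) from hx.ne)]
      exact ENNReal.tendsto_pow_atTop_nhds_zero_of_lt_one
        (ENNReal.ofReal_lt_one.2 ((div_lt_one hY).2 hx))
    · simp [div_self hY.ne']
  have hA' := tendsto_nhds_unique (tendsto_const_nhds (x := ν A))
    ((hgeom.add hatom).congr fun n => (hexpand n).symm)
  rw [hA', Measure.add_apply, withDensity_apply _ hA, Measure.restrict_smul, lintegral_smul_measure,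
    Measure.smul_apply, Measure.dirac_apply' _ hA, smul_eq_mul, smul_eq_mul]
  by_cases hYA : Y ∈ A <;> simp [hYA]

end FixedPoint

/-- The limit `p^{a,*}` has density `β psi (level β p^{a,*})` against `q^a`, plus possibly an atom
at its level (`eq_withDensity_psi_add_dirac_of_tendstoTV`). -/
noncomputable def level (β : ℝ) (ν : Measure ℝ) : ℝ := (∫ x, x ∂ν) / (1 - β)

section Limit

variable {β a : ℝ} {Q ν : Measure ℝ}

theorem integral_id_kingman_pos (hβ : β ∈ Ioo 0 1) (ha₀ : 0 < a) [IsProbabilityMeasure Q]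
    (hQ : Q (Icc 0 a)ᶜ = 0) (i : ℕ) : 0 < ∫ x, x ∂kingman β Q (Measure.dirac a) i := by
  obtain ⟨_, hsupp, hatom⟩ := kingman_dirac_spec hβ ha₀ hQ i
  exact integral_id_pos hsupp ha₀ hatom

theorem isProbabilityMeasure_of_tendstoTV (hβ : β ∈ Ioo 0 1) (ha₀ : 0 < a)
    [IsProbabilityMeasure Q] (hQ : Q (Icc 0 a)ᶜ = 0)
    (hν : TendstoTV (kingman β Q (Measure.dirac a)) ν) : IsProbabilityMeasure ν :=
  have := fun i => (kingman_dirac_spec hβ ha₀ hQ i).1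
  hν.isProbabilityMeasure

theorem measure_compl_Icc_of_tendstoTV (hβ : β ∈ Ioo 0 1) (ha₀ : 0 < a)
    [IsProbabilityMeasure Q] (hQ : Q (Icc 0 a)ᶜ = 0)
    (hν : TendstoTV (kingman β Q (Measure.dirac a)) ν) : ν (Icc 0 a)ᶜ = 0 :=
  have := isProbabilityMeasure_of_tendstoTV hβ ha₀ hQ hν
  hν.measure_eq_zero measurableSet_Icc.compl fun i => (kingman_dirac_spec hβ ha₀ hQ i).2.1

theorem tendsto_setLIntegral_of_tendstoTV (hβ : β ∈ Ioo 0 1) (ha₀ : 0 < a) (ha₁ : a ≤ 1)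
    [IsProbabilityMeasure Q] (hQ : Q (Icc 0 a)ᶜ = 0)
    (hν : TendstoTV (kingman β Q (Measure.dirac a)) ν) {A : Set ℝ} (hA : MeasurableSet A) :
    Tendsto (fun i => ∫⁻ x in A, ENNReal.ofReal x ∂kingman β Q (Measure.dirac a) i) atTop
      (𝓝 (∫⁻ x in A, ENNReal.ofReal x ∂ν)) := by
  have := fun i => (kingman_dirac_spec hβ ha₀ hQ i).1
  have hsub : (Icc (0 : ℝ) 1)ᶜ ⊆ (Icc 0 a)ᶜ := compl_subset_compl.2 (Icc_subset_Icc_right ha₁)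
  exact hν.tendsto_setLIntegral_ofReal
    (fun i => measure_mono_null hsub (kingman_dirac_spec hβ ha₀ hQ i).2.1)
    (measure_mono_null hsub (measure_compl_Icc_of_tendstoTV hβ ha₀ hQ hν)) hA

theorem tendsto_integral_id_of_tendstoTV (hβ : β ∈ Ioo 0 1) (ha₀ : 0 < a) (ha₁ : a ≤ 1)
    [IsProbabilityMeasure Q] (hQ : Q (Icc 0 a)ᶜ = 0)
    (hν : TendstoTV (kingman β Q (Measure.dirac a)) ν) :
    Tendsto (fun i => ∫ x, x ∂kingman β Q (Measure.dirac a) i) atTop (𝓝 (∫ x, x ∂ν)) := by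
  have := isProbabilityMeasure_of_tendstoTV hβ ha₀ hQ hν
  have hνsupp := measure_compl_Icc_of_tendstoTV hβ ha₀ hQ hν
  have h := tendsto_setLIntegral_of_tendstoTV hβ ha₀ ha₁ hQ hν MeasurableSet.univ
  simp only [Measure.restrict_univ] at h
  simp only [integral_id_eq_toReal hνsupp,
    fun i => integral_id_eq_toReal (kingman_dirac_spec hβ ha₀ hQ i).2.1]
  exact (ENNReal.tendsto_toReal (lintegral_ofReal_ne_top hνsupp)).comp h

/-- If the mean fitness stayed below `(1 - β) a`, the atom at the top fitness `a` would grow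
geometrically along the iteration. -/
theorem sub_mul_le_integral_id (hβ : β ∈ Ioo 0 1) (ha₀ : 0 < a) (ha₁ : a ≤ 1)
    [IsProbabilityMeasure Q] (hQ : Q (Icc 0 a)ᶜ = 0)
    (hν : TendstoTV (kingman β Q (Measure.dirac a)) ν) : (1 - β) * a ≤ ∫ x, x ∂ν := by
  set p := kingman β Q (Measure.dirac a)
  have := isProbabilityMeasure_of_tendstoTV hβ ha₀ hQ hν
  have := fun i => (kingman_dirac_spec hβ ha₀ hQ i).1
  by_contra! hlt
  have hm0 : 0 ≤ ∫ x, x ∂ν := integral_nonneg_of_ae <|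
    (ae_mem_Icc (measure_compl_Icc_of_tendstoTV hβ ha₀ hQ hν)).mono fun _ hx => hx.1
  obtain ⟨m, hνm, hm⟩ := exists_between hlt
  have hρ : 1 < (1 - β) * a / m := (one_lt_div (hm0.trans_lt hνm)).2 hm
  obtain ⟨N, hN⟩ := eventually_atTop.1 <|
    (tendsto_integral_id_of_tendstoTV hβ ha₀ ha₁ hQ hν).eventually_lt_const hνm
  have hgrow (i : ℕ) (hi : N ≤ i) :
      ENNReal.ofReal ((1 - β) * a / m) * p i {a} ≤ p (i + 1) {a} := by
    have hmi := integral_id_kingman_pos hβ ha₀ hQ i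
    rw [kingman_succ_apply hmi (measurableSet_singleton a), lintegral_singleton, ← mul_assoc,
      ← ENNReal.ofReal_mul (div_pos (sub_pos.2 hβ.2) hmi).le]
    refine le_add_right (mul_le_mul_left (ENNReal.ofReal_le_ofReal ?_) _)
    rw [div_mul_eq_mul_div]
    exact div_le_div_of_nonneg_left (by nlinarith [hβ.2]) hmi (hN i hi).le
  have hmono : Monotone fun k => p (k + N) {a} := monotone_nat_of_le_succ fun k =>
    le_mul_of_one_le_left' (ENNReal.one_le_ofReal.2 hρ.le) |>.trans
      (by simpa [add_right_comm] using hgrow _ (Nat.le_add_left N k))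
  have hlim := hν.tendsto_apply (measurableSet_singleton a)
  have hpos : p N {a} ≤ ν {a} := ge_of_tendsto ((hlim.comp (tendsto_add_atTop_nat N)))
    (Eventually.of_forall fun k => by simpa using hmono (Nat.zero_le k))
  have hle : ENNReal.ofReal ((1 - β) * a / m) * ν {a} ≤ 1 * ν {a} := by
    rw [one_mul]
    exact le_of_tendsto_of_tendsto (ENNReal.Tendsto.const_mul hlim (Or.inr ENNReal.ofReal_ne_top))
      (hlim.comp (tendsto_add_atTop_nat 1)) (eventually_atTop.2 ⟨N, hgrow⟩)
  have hνa : ν {a} ≠ 0 :=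
    ((pos_iff_ne_zero.2 (kingman_dirac_spec hβ ha₀ hQ N).2.2).trans_le hpos).ne'
  exact (ENNReal.mul_lt_mul_left hνa (measure_ne_top ν _) (ENNReal.one_lt_ofReal.2 hρ)).not_ge hle

theorem le_level (hβ : β ∈ Ioo 0 1) (ha₀ : 0 < a) (ha₁ : a ≤ 1) [IsProbabilityMeasure Q]
    (hQ : Q (Icc 0 a)ᶜ = 0) (hν : TendstoTV (kingman β Q (Measure.dirac a)) ν) :
    a ≤ level β ν := by
  rw [level, le_div_iff₀ (sub_pos.2 hβ.2), mul_comm]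
  exact sub_mul_le_integral_id hβ ha₀ ha₁ hQ hν

theorem fixedPoint_of_tendstoTV (hβ : β ∈ Ioo 0 1) (ha₀ : 0 < a) (ha₁ : a ≤ 1)
    [IsProbabilityMeasure Q] (hQ : Q (Icc 0 a)ᶜ = 0)
    (hν : TendstoTV (kingman β Q (Measure.dirac a)) ν) :
    ν = ν.withDensity (fun x => ENNReal.ofReal (x / level β ν)) + ENNReal.ofReal β • Q := by
  have := isProbabilityMeasure_of_tendstoTV hβ ha₀ hQ hν
  have := fun i => (kingman_dirac_spec hβ ha₀ hQ i).1
  have hm : 0 < ∫ x, x ∂ν :=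
    (mul_pos (sub_pos.2 hβ.2) ha₀).trans_le (sub_mul_le_integral_id hβ ha₀ ha₁ hQ hν)
  ext A hA
  have hfin : ∫⁻ x in A, ENNReal.ofReal x ∂ν ≠ ∞ :=
    ne_top_of_le_ne_top (lintegral_ofReal_ne_top (measure_compl_Icc_of_tendstoTV hβ ha₀ hQ hν))
      (setLIntegral_le_lintegral _ _)
  have hlim : Tendsto (fun i => kingman β Q (Measure.dirac a) (i + 1) A) atTop
      (𝓝 (ENNReal.ofReal ((1 - β) / ∫ x, x ∂ν) * ∫⁻ x in A, ENNReal.ofReal x ∂ν +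
        ENNReal.ofReal β * Q A)) := by
    refine ((ENNReal.Tendsto.mul (ENNReal.tendsto_ofReal (tendsto_const_nhds.div
      (tendsto_integral_id_of_tendstoTV hβ ha₀ ha₁ hQ hν) hm.ne')) (Or.inr hfin)
      (tendsto_setLIntegral_of_tendstoTV hβ ha₀ ha₁ hQ hν hA)
      (Or.inr ENNReal.ofReal_ne_top)).add tendsto_const_nhds).congr fun i => ?_
    exact (kingman_succ_apply (integral_id_kingman_pos hβ ha₀ hQ i) hA).symm
  rw [tendsto_nhds_unique ((hν.tendsto_apply hA).comp (tendsto_add_atTop_nat 1)) hlim,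
    Measure.add_apply, withDensity_apply _ hA, Measure.smul_apply, smul_eq_mul,
    ← lintegral_const_mul _ ENNReal.measurable_ofReal]
  congr 2 with x
  rw [← ENNReal.ofReal_mul (div_nonneg (sub_pos.2 hβ.2).le hm.le), level, div_div_eq_mul_div]
  ring_nf

/-- If the level were not `a`, no iterate would charge it, since `Q` does not. -/
theorem level_eq_of_measure_singleton_ne_zero (hβ : β ∈ Ioo 0 1) (ha₀ : 0 < a) (ha₁ : a ≤ 1)
    [IsProbabilityMeasure Q] (hQ : Q (Icc 0 a)ᶜ = 0)
    (hν : TendstoTV (kingman β Q (Measure.dirac a)) ν) (h : ν {level β ν} ≠ 0) :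
    level β ν = a := by
  have := isProbabilityMeasure_of_tendstoTV hβ ha₀ hQ hν
  have hQY : Q {level β ν} = 0 := by
    have hIci := mul_measure_Ici_eq_zero_of_fixedPoint (ha₀.trans_le (le_level hβ ha₀ ha₁ hQ hν))
      (fixedPoint_of_tendstoTV hβ ha₀ ha₁ hQ hν)
    exact measure_mono_null (singleton_subset_iff.2 (mem_Ici.2 le_rfl))
      ((mul_eq_zero.1 hIci).resolve_left (ENNReal.ofReal_pos.2 hβ.1).ne')
  by_contra hne
  refine h (hν.measure_eq_zero (measurableSet_singleton _) fun i => ?_)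
  induction i with
  | zero => simp [kingman, hne]
  | succ i ih =>
    rw [kingman_succ_apply (integral_id_kingman_pos hβ ha₀ hQ i) (measurableSet_singleton _),
      lintegral_singleton, ih, hQY]
    simp

end Limit

section Truncation

variable {β a : ℝ} {q ν : Measure ℝ}

instance isProbabilityMeasure_trunc [IsProbabilityMeasure q] : IsProbabilityMeasure (trunc a q) :=
  Measure.isProbabilityMeasure_map (by fun_prop)

theorem trunc_compl_Icc (hq : q (Icc 0 1)ᶜ = 0) (ha₀ : 0 ≤ a) : trunc a q (Icc 0 a)ᶜ = 0 := by
  rw [trunc, Measure.map_apply (by fun_prop) measurableSet_Icc.compl]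
  exact measure_mono_null (fun x (hx : min x a ∈ (Icc 0 a)ᶜ) (hx01 : x ∈ Icc (0 : ℝ) 1) =>
    hx ⟨le_min hx01.1 ha₀, min_le_right x a⟩) hq

noncomputable def phi (q : Measure ℝ) (a y : ℝ) : ℝ≥0∞ := ∫⁻ x, psi y (min x a) ∂q

theorem lintegral_psi_trunc (y : ℝ) : ∫⁻ x, psi y x ∂trunc a q = phi q a y :=
  lintegral_map (measurable_psi y) (by fun_prop)

theorem eq_withDensity_psi_add_dirac_of_tendstoTV (hβ : β ∈ Ioo 0 1) (ha₀ : 0 < a) (ha₁ : a ≤ 1)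
    [IsProbabilityMeasure q] (hq : q (Icc 0 1)ᶜ = 0)
    (hν : TendstoTV (kingman β (trunc a q) (Measure.dirac a)) ν) :
    ν = (ENNReal.ofReal β • trunc a q).withDensity (psi (level β ν)) +
      ν {level β ν} • Measure.dirac (level β ν) :=
  have hQ := trunc_compl_Icc hq ha₀.le
  have := isProbabilityMeasure_of_tendstoTV hβ ha₀ hQ hν
  eq_withDensity_psi_add_dirac_of_fixedPoint (ha₀.trans_le (le_level hβ ha₀ ha₁ hQ hν))
    (fixedPoint_of_tendstoTV hβ ha₀ ha₁ hQ hν)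

theorem ofReal_mul_phi_add_measure_singleton (hβ : β ∈ Ioo 0 1) (ha₀ : 0 < a) (ha₁ : a ≤ 1)
    [IsProbabilityMeasure q] (hq : q (Icc 0 1)ᶜ = 0)
    (hν : TendstoTV (kingman β (trunc a q) (Measure.dirac a)) ν) :
    ENNReal.ofReal β * phi q a (level β ν) + ν {level β ν} = 1 := by
  have := isProbabilityMeasure_of_tendstoTV hβ ha₀ (trunc_compl_Icc hq ha₀.le) hν
  have h := congrArg (· univ) (eq_withDensity_psi_add_dirac_of_tendstoTV hβ ha₀ ha₁ hq hν)
  simp only [measure_univ, Measure.add_apply, withDensity_apply _ MeasurableSet.univ,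
    Measure.restrict_univ, lintegral_smul_measure, lintegral_psi_trunc, Measure.smul_apply,
    Measure.dirac_apply_of_mem (mem_univ _), smul_eq_mul, mul_one] at h
  exact h.symm

theorem ofReal_mul_phi_le_one (hβ : β ∈ Ioo 0 1) (ha₀ : 0 < a) (ha₁ : a ≤ 1)
    [IsProbabilityMeasure q] (hq : q (Icc 0 1)ᶜ = 0)
    (hν : TendstoTV (kingman β (trunc a q) (Measure.dirac a)) ν) :
    ENNReal.ofReal β * phi q a (level β ν) ≤ 1 :=
  le_self_add.trans (ofReal_mul_phi_add_measure_singleton hβ ha₀ ha₁ hq hν).le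

theorem phi_level_ne_top (hβ : β ∈ Ioo 0 1) (ha₀ : 0 < a) (ha₁ : a ≤ 1)
    [IsProbabilityMeasure q] (hq : q (Icc 0 1)ᶜ = 0)
    (hν : TendstoTV (kingman β (trunc a q) (Measure.dirac a)) ν) :
    phi q a (level β ν) ≠ ∞ := fun h => by
  have h1 := ofReal_mul_phi_le_one hβ ha₀ ha₁ hq hν
  rw [h, ENNReal.mul_top (ENNReal.ofReal_pos.2 hβ.1).ne'] at h1
  exact ENNReal.one_ne_top (top_le_iff.1 h1)

theorem ofReal_mul_phi_eq_one (hβ : β ∈ Ioo 0 1) (ha₀ : 0 < a) (ha₁ : a ≤ 1)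
    [IsProbabilityMeasure q] (hq : q (Icc 0 1)ᶜ = 0)
    (hν : TendstoTV (kingman β (trunc a q) (Measure.dirac a)) ν) (ha : level β ν ≠ a) :
    ENNReal.ofReal β * phi q a (level β ν) = 1 := by
  have hatom : ν {level β ν} = 0 := by
    by_contra h
    exact ha (level_eq_of_measure_singleton_ne_zero hβ ha₀ ha₁ (trunc_compl_Icc hq ha₀.le) hν h)
  simpa [hatom] using ofReal_mul_phi_add_measure_singleton hβ ha₀ ha₁ hq hν

theorem integral_eq_level_add_of_tendstoTV (hβ : β ∈ Ioo 0 1) (ha₀ : 0 < a) (ha₁ : a ≤ 1)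
    [IsProbabilityMeasure q] (hq : q (Icc 0 1)ᶜ = 0)
    (hν : TendstoTV (kingman β (trunc a q) (Measure.dirac a)) ν) (f : ℝ →ᵇ ℝ) :
    ∫ x, f x ∂ν = f (level β ν) + β * ∫ x, (psi (level β ν) (min x a)).toReal *
      (f (min x a) - f (level β ν)) ∂q := by
  set Y := level β ν
  have := isProbabilityMeasure_of_tendstoTV hβ ha₀ (trunc_compl_Icc hq ha₀.le) hν
  have hψ : ∫⁻ x, psi Y x ∂(ENNReal.ofReal β • trunc a q) ≠ ∞ := by
    rw [lintegral_smul_measure, lintegral_psi_trunc, smul_eq_mul]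
    exact ENNReal.mul_ne_top ENNReal.ofReal_ne_top (phi_level_ne_top hβ ha₀ ha₁ hq hν)
  have := isFiniteMeasure_withDensity hψ
  have : IsFiniteMeasure (ν {Y} • Measure.dirac Y) := by
    constructor; simp [measure_lt_top]
  set g : ℝ →ᵇ ℝ := f - BoundedContinuousFunction.const ℝ (f Y)
  have h := congrArg (fun μ => ∫ x, g x ∂μ)
    (eq_withDensity_psi_add_dirac_of_tendstoTV hβ ha₀ ha₁ hq hν)
  rw [integral_add_measure (g.integrable _) (g.integrable _), integral_smul_measure,
    integral_dirac, integral_withDensity_eq_integral_toReal_smul (measurable_psi Y)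
    (ae_lt_top (measurable_psi Y) hψ), integral_smul_measure, trunc,
    integral_map (f := fun x => (psi Y x).toReal • g x) (by fun_prop)
      ((measurable_psi Y).ennreal_toReal.smul g.continuous.measurable).aestronglyMeasurable] at h
  simp only [g, BoundedContinuousFunction.coe_sub, BoundedContinuousFunction.const_apply,
    Pi.sub_apply, smul_eq_mul, ENNReal.toReal_ofReal hβ.1.le,
    integral_sub (f.integrable ν) (integrable_const _), integral_const, probReal_univ] at h
  linarith

end Truncation

section Phi

variable {q : Measure ℝ} {a a' u t : ℝ}

theorem phi_le_phi_of_le_right (hq : q (Icc 0 1)ᶜ = 0) (ha₀ : 0 ≤ a) (hu : 0 < u) (hut : u ≤ t) :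
    phi q a t ≤ phi q a u :=
  lintegral_mono_ae <| (ae_mem_Icc hq).mono fun _ hx =>
    psi_le_psi_of_le_left (le_min hx.1 ha₀) hu hut

theorem phi_le_phi_of_le_left (haa' : a ≤ a') (hu : 0 < u) : phi q a u ≤ phi q a' u :=
  lintegral_mono fun _ => psi_monotone hu (min_le_min le_rfl haa')

theorem phi_lt_phi_of_lt_right [IsProbabilityMeasure q] (hq : q (Icc 0 1)ᶜ = 0) (ha₀ : 0 < a)
    (hu : 0 < u) (hut : u < t) (hfin : phi q a t ≠ ∞) (hne : phi q a t ≠ 1) :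
    phi q a t < phi q a u := by
  have hmeas (y : ℝ) : Measurable fun x => psi y (min x a) := (measurable_psi y).comp (by fun_prop)
  refine lintegral_strict_mono_of_ae_le_of_frequently_ae_lt (hmeas u).aemeasurable hfin
    ((ae_mem_Icc hq).mono fun x hx => psi_le_psi_of_le_left (le_min hx.1 ha₀.le) hu hut.le) ?_
  have hfreq : ∃ᵐ x ∂q, psi t (min x a) ≠ 1 := fun h => hne <| by
    rw [phi, lintegral_congr_ae (h.mono fun _ hx => not_not.1 hx), lintegral_one, measure_univ]
  refine (hfreq.and_eventually ((ae_lt_top (hmeas t) hfin).and (ae_mem_Icc hq))).mono ?_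
  rintro x ⟨hx1, hxt, hx⟩
  have hpos : 0 < min x a :=
    lt_min (hx.1.lt_of_ne fun h => hx1 (by rw [← h, min_eq_left ha₀.le, psi_zero])) ha₀
  exact (psi_lt_psi_of_lt_left hpos hu hut hxt.ne).ne

theorem tendsto_phi_nhdsLT (hu : 0 < u) :
    Tendsto (fun a => phi q a u) (𝓝[<] 1) (𝓝 (phi q 1 u)) := by
  have hmono : Monotone fun a => phi q a u := fun _ _ h => phi_le_phi_of_le_left h hu
  have hmono' : Monotone fun n : ℕ => 1 - 1 / ((n : ℝ) + 1) := fun m n hmn => by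
    have : 1 / ((n : ℝ) + 1) ≤ 1 / ((m : ℝ) + 1) :=
      one_div_le_one_div_of_le (by positivity) (by exact_mod_cast Nat.add_le_add_right hmn 1)
    linarith
  convert hmono.tendsto_nhdsLT 1 using 2
  refine le_antisymm ?_ (sSup_le (forall_mem_image.2 fun a ha => hmono (le_of_lt ha)))
  have hseq : Tendsto (fun n : ℕ => 1 - 1 / ((n : ℝ) + 1)) atTop (𝓝 1) := by
    simpa using tendsto_const_nhds.sub (tendsto_one_div_add_atTop_nhds_zero_nat (𝕜 := ℝ))
  have hlim : Tendsto (fun n : ℕ => phi q (1 - 1 / ((n : ℝ) + 1)) u) atTop (𝓝 (phi q 1 u)) :=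
    lintegral_tendsto_of_tendsto_of_monotone
      (fun n => ((measurable_psi u).comp (by fun_prop)).aemeasurable)
      (ae_of_all _ fun _ m n hmn => psi_monotone hu (min_le_min le_rfl (hmono' hmn)))
      (ae_of_all _ fun x => tendsto_const_nhds.psi
        ((continuous_const.min continuous_id).tendsto 1 |>.comp hseq) hu.ne')
  exact le_of_tendsto' hlim fun n =>
    le_sSup ⟨1 - 1 / ((n : ℝ) + 1), mem_Iio.2 (sub_lt_self (1 : ℝ) (by positivity)), rfl⟩

end Phi

section LevelContinuity

variable {β a t u : ℝ} {q ν ν₁ : Measure ℝ}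

theorem ofReal_mul_phi_lt_one (hβ : β ∈ Ioo 0 1) [IsProbabilityMeasure q] (hq : q (Icc 0 1)ᶜ = 0)
    (hν₁ : TendstoTV (kingman β (trunc 1 q) (Measure.dirac 1)) ν₁) (ht : level β ν₁ < t) :
    ENNReal.ofReal β * phi q 1 t < 1 := by
  have hY₁ : 0 < level β ν₁ :=
    one_pos.trans_le (le_level hβ one_pos le_rfl (trunc_compl_Icc hq zero_le_one) hν₁)
  by_cases h1 : phi q 1 t = 1
  · rw [h1, mul_one]; exact ENNReal.ofReal_lt_one.2 hβ.2
  have hfin := ne_top_of_le_ne_top (phi_level_ne_top hβ one_pos le_rfl hq hν₁)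
    (phi_le_phi_of_le_right hq zero_le_one hY₁ ht.le)
  exact (ENNReal.mul_lt_mul_right (ENNReal.ofReal_pos.2 hβ.1).ne' ENNReal.ofReal_ne_top
    (phi_lt_phi_of_lt_right hq one_pos hY₁ ht hfin h1)).trans_le
    (ofReal_mul_phi_le_one hβ one_pos le_rfl hq hν₁)

theorem level_lt_of_level_one_lt (hβ : β ∈ Ioo 0 1) [IsProbabilityMeasure q]
    (hq : q (Icc 0 1)ᶜ = 0) (hν₁ : TendstoTV (kingman β (trunc 1 q) (Measure.dirac 1)) ν₁)
    (ha : a ∈ Ioo 0 1) (hν : TendstoTV (kingman β (trunc a q) (Measure.dirac a)) ν)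
    (ht : level β ν₁ < t) : level β ν < t := by
  by_contra! hle
  have h1t : 1 < t :=
    (le_level hβ one_pos le_rfl (trunc_compl_Icc hq zero_le_one) hν₁).trans_lt ht
  have ht₀ : 0 < t := one_pos.trans h1t
  refine (ofReal_mul_phi_lt_one hβ hq hν₁ ht).not_ge ?_
  calc 1 = ENNReal.ofReal β * phi q a (level β ν) :=
        (ofReal_mul_phi_eq_one hβ ha.1 ha.2.le hq hν (ha.2.trans (h1t.trans_le hle)).ne').symm
    _ ≤ ENNReal.ofReal β * phi q 1 t := by
      gcongr
      exact (phi_le_phi_of_le_right hq ha.1.le ht₀ hle).trans (phi_le_phi_of_le_left ha.2.le ht₀)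

theorem eventually_lt_level (hβ : β ∈ Ioo 0 1) [IsProbabilityMeasure q]
    (hq : q (Icc 0 1)ᶜ = 0) {plim : ℝ → Measure ℝ}
    (hplim : ∀ a ∈ Ioc (0 : ℝ) 1, TendstoTV (kingman β (trunc a q) (Measure.dirac a)) (plim a))
    (hu : u < level β (plim 1)) : ∀ᶠ a in 𝓝[<] 1, u < level β (plim a) := by
  have hIoo : Ioo 0 1 ∈ 𝓝[<] (1 : ℝ) := Ioo_mem_nhdsLT_of_mem ⟨one_pos, le_rfl⟩
  have hle (a : ℝ) (ha : a ∈ Ioo 0 1) : a ≤ level β (plim a) :=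
    le_level hβ ha.1 ha.2.le (trunc_compl_Icc hq ha.1.le) (hplim a ⟨ha.1, ha.2.le⟩)
  rcases lt_or_ge u 1 with hu1 | hu1
  · filter_upwards [hIoo, Ioo_mem_nhdsLT_of_mem ⟨hu1, le_rfl⟩] with a ha hua
    exact hua.1.trans_le (hle a ha)
  -- now `level β (plim 1) > 1`, so `plim 1` has no atom and `β phi q 1 u > 1`
  have hν₁ := hplim 1 ⟨one_pos, le_rfl⟩
  have hβ0 : ENNReal.ofReal β ≠ 0 := (ENNReal.ofReal_pos.2 hβ.1).ne'
  have heq := ofReal_mul_phi_eq_one hβ one_pos le_rfl hq hν₁ (hu1.trans_lt hu).ne'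
  have hne : phi q 1 (level β (plim 1)) ≠ 1 := fun h => by
    rw [h, mul_one] at heq
    exact (ENNReal.ofReal_lt_one.2 hβ.2).ne heq
  have hu0 : 0 < u := one_pos.trans_le hu1
  have hlt : 1 < ENNReal.ofReal β * phi q 1 u := heq ▸ ENNReal.mul_lt_mul_right hβ0
    ENNReal.ofReal_ne_top (phi_lt_phi_of_lt_right hq one_pos hu0 hu
      (phi_level_ne_top hβ one_pos le_rfl hq hν₁) hne)
  filter_upwards [hIoo, (ENNReal.Tendsto.const_mul (tendsto_phi_nhdsLT hu0)
    (Or.inr ENNReal.ofReal_ne_top)).eventually (lt_mem_nhds hlt)] with a ha hlt_a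
  by_contra! hYu
  refine (ofReal_mul_phi_le_one hβ ha.1 ha.2.le hq (hplim a ⟨ha.1, ha.2.le⟩)).not_gt
    (hlt_a.trans_le ?_)
  gcongr
  exact phi_le_phi_of_le_right hq ha.1.le (ha.1.trans_le (hle a ha)) hYu

theorem tendsto_level (hβ : β ∈ Ioo 0 1) [IsProbabilityMeasure q] (hq : q (Icc 0 1)ᶜ = 0)
    {plim : ℝ → Measure ℝ}
    (hplim : ∀ a ∈ Ioc (0 : ℝ) 1, TendstoTV (kingman β (trunc a q) (Measure.dirac a)) (plim a)) :
    Tendsto (fun a => level β (plim a)) (𝓝[<] 1) (𝓝 (level β (plim 1))) := by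
  refine tendsto_order.2 ⟨fun u hu => eventually_lt_level hβ hq hplim hu, fun t ht => ?_⟩
  filter_upwards [Ioo_mem_nhdsLT_of_mem ⟨one_pos, le_rfl⟩] with a ha
  exact level_lt_of_level_one_lt hβ hq (hplim 1 ⟨one_pos, le_rfl⟩) ha (hplim a ⟨ha.1, ha.2.le⟩) ht

end LevelContinuity

theorem abs_setIntegral_mul_le {α : Type*} [MeasurableSpace α] {μ : Measure α} {w g : α → ℝ}
    {s : Set α} {K : ℝ} (hw : Integrable w μ) (hw₀ : 0 ≤ w) (hK : 0 ≤ K) (hs : MeasurableSet s)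
    (hg : ∀ᵐ x ∂μ, x ∈ s → |g x| ≤ K) : |∫ x in s, w x * g x ∂μ| ≤ K * ∫ x, w x ∂μ :=
  calc |∫ x in s, w x * g x ∂μ| ≤ ∫ x in s, K * w x ∂μ := by
        rw [← Real.norm_eq_abs]
        refine norm_integral_le_of_norm_le (hw.restrict.const_mul K) ?_
        filter_upwards [ae_restrict_of_ae hg, ae_restrict_mem hs] with x hx hxs
        rw [norm_mul, Real.norm_of_nonneg (hw₀ x), mul_comm K]
        exact mul_le_mul_of_nonneg_left (hx hxs) (hw₀ x)
    _ = K * ∫ x in s, w x ∂μ := integral_const_mul K w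
    _ ≤ K * ∫ x, w x ∂μ :=
      mul_le_mul_of_nonneg_left (setIntegral_le_integral hw (ae_of_all _ hw₀)) hK

section WeakConvergence

variable {q : Measure ℝ} {Y : ℝ → ℝ} {a y c β : ℝ}

theorem tendsto_setIntegral_Iic_psi_mul [IsFiniteMeasure q] (hq : q (Icc 0 1)ᶜ = 0)
    (hY : Tendsto Y (𝓝[<] 1) (𝓝 (Y 1))) (hc₀ : 0 ≤ c) (hc : c < Y 1) (f : ℝ →ᵇ ℝ) :
    Tendsto (fun a => ∫ x in Iic c, (psi (Y a) (min x a)).toReal * (f (min x a) - f (Y a)) ∂q)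
      (𝓝[<] 1) (𝓝 (∫ x in Iic c, (psi (Y 1) (min x 1)).toReal * (f (min x 1) - f (Y 1)) ∂q)) := by
  obtain ⟨t, hct, htY⟩ := exists_between hc
  have ht₀ : 0 < t := hc₀.trans_lt hct
  have hmin (x : ℝ) : Tendsto (fun a => min x a) (𝓝[<] 1) (𝓝 (min x 1)) :=
    ((continuous_const.min continuous_id).tendsto 1).mono_left nhdsWithin_le_nhds
  refine tendsto_integral_filter_of_dominated_convergence (fun _ => (1 - c / t)⁻¹ * (2 * ‖f‖))
    (Eventually.of_forall fun a => ?_) ?_ (integrable_const _) ?_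
  · exact (((measurable_psi _).comp (by fun_prop)).ennreal_toReal.mul
      ((f.continuous.measurable.comp (by fun_prop)).sub measurable_const)).aestronglyMeasurable
  · filter_upwards [Ioo_mem_nhdsLT_of_mem ⟨one_pos, le_rfl⟩, hY.eventually (Ici_mem_nhds htY)]
      with a ha hYa
    filter_upwards [ae_restrict_of_ae (ae_mem_Icc hq), ae_restrict_mem measurableSet_Iic]
      with x hx hxc
    rw [norm_mul, Real.norm_of_nonneg ENNReal.toReal_nonneg, ← dist_eq_norm]
    exact mul_le_mul (psi_toReal_le (le_min hx.1 ha.1.le) ((min_le_left x a).trans hxc) hct hYa)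
      (f.dist_le_two_norm _ _) dist_nonneg
      (inv_nonneg.2 (sub_nonneg.2 ((div_le_one ht₀).2 hct.le)))
  · filter_upwards [ae_restrict_of_ae (ae_mem_Icc hq), ae_restrict_mem measurableSet_Iic]
      with x hx hxc
    have hψ := (ENNReal.tendsto_toReal (psi_ne_top (le_min hx.1 zero_le_one)
      ((min_le_left x 1).trans_lt (hxc.trans_lt hc)))).comp
      (hY.psi (hmin x) (hc₀.trans_lt hc).ne')
    exact hψ.mul (((f.continuous.tendsto _).comp (hmin x)).sub ((f.continuous.tendsto _).comp hY))

theorem phi_le_ofReal_inv (hβ : 0 < β) (h : ENNReal.ofReal β * phi q a y ≤ 1) :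
    phi q a y ≤ ENNReal.ofReal β⁻¹ := by
  rw [ENNReal.ofReal_inv_of_pos hβ, ENNReal.le_inv_iff_mul_le, mul_comm]
  exact h

theorem integrable_psi_mul_sub (h : phi q a y ≠ ∞) (f : ℝ →ᵇ ℝ) (z : ℝ) :
    Integrable (fun x => (psi y (min x a)).toReal * (f (min x a) - f z)) q := by
  refine (integrable_toReal_of_lintegral_ne_top ((measurable_psi y).comp (by fun_prop)).aemeasurable
    h).mul_bdd (c := 2 * ‖f‖) ((f.continuous.measurable.comp
      (measurable_id.min measurable_const)).sub measurable_const).aestronglyMeasurable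
    (ae_of_all _ fun x => ?_)
  rw [← dist_eq_norm]
  exact f.dist_le_two_norm _ _

theorem abs_setIntegral_Ioi_psi_mul_le (hq : q (Icc 0 1)ᶜ = 0) (hβ : 0 < β)
    (h : ENNReal.ofReal β * phi q a y ≤ 1) {g : ℝ → ℝ} {η : ℝ} (hη : 0 ≤ η)
    (hg : ∀ x ∈ Ioc c 1, |g x| ≤ η) :
    |∫ x in Ioi c, (psi y (min x a)).toReal * g x ∂q| ≤ η * β⁻¹ := by
  have hmeas : Measurable fun x => psi y (min x a) := (measurable_psi y).comp (by fun_prop)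
  have hfin := ne_top_of_le_ne_top ENNReal.ofReal_ne_top (phi_le_ofReal_inv hβ h)
  refine (abs_setIntegral_mul_le (integrable_toReal_of_lintegral_ne_top hmeas.aemeasurable hfin)
    (fun _ => ENNReal.toReal_nonneg) hη measurableSet_Ioi
    ((ae_mem_Icc hq).mono fun x hx hxc => hg x ⟨hxc, hx.2⟩)).trans
    (mul_le_mul_of_nonneg_left ?_ hη)
  rw [integral_toReal hmeas.aemeasurable (ae_lt_top hmeas hfin)]
  exact ENNReal.toReal_le_of_le_ofReal (inv_nonneg.2 hβ.le) (phi_le_ofReal_inv hβ h)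

theorem exists_abs_setIntegral_Ioi_le (hq : q (Icc 0 1)ᶜ = 0) (hβ : 0 < β)
    (hY : Tendsto Y (𝓝[<] 1) (𝓝 (Y 1))) (hY₁ : 1 ≤ Y 1)
    (hphi : ∀ a ∈ Ioc (0 : ℝ) 1, ENNReal.ofReal β * phi q a (Y a) ≤ 1) (f : ℝ →ᵇ ℝ) {η : ℝ}
    (hη : 0 < η) : ∃ c, 0 ≤ c ∧ c < Y 1 ∧ ∀ᶠ a in 𝓝[≤] 1,
      |∫ x in Ioi c, (psi (Y a) (min x a)).toReal * (f (min x a) - f (Y a)) ∂q| ≤ 2 * η * β⁻¹ := by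
  obtain ⟨δ, hδ, hfδ⟩ := Metric.continuousAt_iff.1 f.continuous.continuousAt η hη
  have hδ' : 0 < min δ 1 := lt_min hδ one_pos
  -- `c` is so close to `Y 1 ≥ 1` that `f` barely varies on `(c, Y 1]`
  set c := Y 1 - min δ 1
  have hclose {z : ℝ} (hz : dist z (Y 1) < min δ 1) : |f z - f (Y 1)| < η := by
    rw [← Real.dist_eq]
    exact hfδ (hz.trans_le (min_le_left δ 1))
  have hcmin : ∀ᶠ a in 𝓝[≤] 1, ∀ x ∈ Ioc c 1, c < min x a := by
    rcases lt_or_ge c 1 with hc1 | hc1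
    · filter_upwards [Ioc_mem_nhdsLE hc1] with a ha x hx using lt_min hx.1 ha.1
    · exact Eventually.of_forall fun a x hx => absurd (hx.1.trans_le hx.2) (not_lt.2 hc1)
  have hY' : ∀ᶠ a in 𝓝[≤] 1, dist (Y a) (Y 1) < min δ 1 := by
    rw [← Iio_insert, nhdsWithin_insert, eventually_sup, eventually_pure, dist_self]
    exact ⟨hδ', hY.eventually (Metric.ball_mem_nhds _ hδ')⟩
  refine ⟨c, by linarith [min_le_right δ 1], by linarith, ?_⟩
  filter_upwards [hcmin, hY', Ioc_mem_nhdsLE one_pos] with a hca hYa ha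
  refine abs_setIntegral_Ioi_psi_mul_le hq hβ (hphi a ha) (by positivity) fun x hx => ?_
  have hxa : dist (min x a) (Y 1) < min δ 1 := by
    rw [Real.dist_eq, abs_sub_lt_iff]
    constructor <;> linarith [hca x hx, min_le_left x a, hx.2]
  have htri := abs_sub_le (f (min x a)) (f (Y 1)) (f (Y a))
  rw [abs_sub_comm (f (Y 1))] at htri
  linarith [hclose hxa, hclose hYa]

theorem tendsto_integral_psi_mul_sub [IsFiniteMeasure q] (hq : q (Icc 0 1)ᶜ = 0) (hβ : 0 < β)
    (hY : Tendsto Y (𝓝[<] 1) (𝓝 (Y 1))) (hY₁ : 1 ≤ Y 1)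
    (hphi : ∀ a ∈ Ioc (0 : ℝ) 1, ENNReal.ofReal β * phi q a (Y a) ≤ 1) (f : ℝ →ᵇ ℝ) :
    Tendsto (fun a => ∫ x, (psi (Y a) (min x a)).toReal * (f (min x a) - f (Y a)) ∂q) (𝓝[<] 1)
      (𝓝 (∫ x, (psi (Y 1) (min x 1)).toReal * (f (min x 1) - f (Y 1)) ∂q)) := by
  set G : ℝ → ℝ → ℝ := fun a x => (psi (Y a) (min x a)).toReal * (f (min x a) - f (Y a))
  show Tendsto (fun a => ∫ x, G a x ∂q) _ (𝓝 (∫ x, G 1 x ∂q))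
  have hsplit (a : ℝ) (ha : a ∈ Ioc 0 1) (c : ℝ) :
      ∫ x, G a x ∂q = ∫ x in Iic c, G a x ∂q + ∫ x in Ioi c, G a x ∂q := by
    rw [← compl_Iic]
    exact (integral_add_compl measurableSet_Iic (integrable_psi_mul_sub (ne_top_of_le_ne_top
      ENNReal.ofReal_ne_top (phi_le_ofReal_inv hβ (hphi a ha))) f (Y a))).symm
  rw [Metric.tendsto_nhds]
  intro ε hε
  set η := ε / (2 * (1 + 4 * β⁻¹))
  have hη : 0 < η := by positivity
  obtain ⟨c, hc₀, hc, htail⟩ := exists_abs_setIntegral_Ioi_le hq hβ hY hY₁ hphi f hη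
  have hT1 : |∫ x in Ioi c, G 1 x ∂q| ≤ 2 * η * β⁻¹ := htail.self_of_nhdsWithin (mem_Iic.2 le_rfl)
  filter_upwards [(tendsto_setIntegral_Iic_psi_mul hq hY hc₀ hc f).eventually
      (Metric.ball_mem_nhds _ hη), htail.filter_mono (nhdsWithin_mono _ Iio_subset_Iic_self),
    Ioo_mem_nhdsLT_of_mem ⟨one_pos, le_rfl⟩] with a hhead hTa ha
  replace hhead : |∫ x in Iic c, G a x ∂q - ∫ x in Iic c, G 1 x ∂q| < η := hhead
  replace hTa : |∫ x in Ioi c, G a x ∂q| ≤ 2 * η * β⁻¹ := hTa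
  rw [Real.dist_eq, hsplit a ⟨ha.1, ha.2.le⟩ c, hsplit 1 ⟨one_pos, le_rfl⟩ c]
  have hηε : η * (1 + 4 * β⁻¹) = ε / 2 := by simp only [η]; field_simp
  calc _ = |(∫ x in Iic c, G a x ∂q - ∫ x in Iic c, G 1 x ∂q) + ∫ x in Ioi c, G a x ∂q +
        -∫ x in Ioi c, G 1 x ∂q| := by ring_nf
    _ ≤ _ := abs_add_three _ _ _
    _ < ε := by rw [abs_neg]; nlinarith [inv_pos.2 hβ]

end WeakConvergence

end Kingman

/-- Corollary 12 of the paper, Assumption 3 for Kingman's model.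
For each `0 < a ≤ 1` let `p^{a,*}` be the total-variation limit of the sequence started
from `δ_a` with mutant distribution `q^a`. Then `p^{a,*}` converges weakly to `p^{1,*}`
as `a → 1⁻`. -/
theorem stmt14 (β : ℝ) (hβ : β ∈ Set.Ioo (0:ℝ) 1)
    (q : MeasureTheory.Measure ℝ) [IsProbabilityMeasure q]
    (hq : q ((Set.Icc (0:ℝ) 1)ᶜ) = 0)
    (plim : ℝ → MeasureTheory.Measure ℝ)
    (hplim : ∀ a ∈ Set.Ioc (0:ℝ) 1,
      TendstoTV (kingman β (trunc a q) (MeasureTheory.Measure.dirac a)) (plim a)) :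
    ∀ f : BoundedContinuousFunction ℝ ℝ,
      Filter.Tendsto (fun a => ∫ x, f x ∂(plim a)) (nhdsWithin 1 (Set.Iio 1))
        (nhds (∫ x, f x ∂(plim 1))) := by
  intro f
  have hY := Kingman.tendsto_level hβ hq hplim
  have hrep (a : ℝ) (ha : a ∈ Ioc (0 : ℝ) 1) :=
    Kingman.integral_eq_level_add_of_tendstoTV hβ ha.1 ha.2 hq (hplim a ha) f
  have hY₁ : 1 ≤ Kingman.level β (plim 1) := Kingman.le_level hβ one_pos le_rfl
    (Kingman.trunc_compl_Icc hq zero_le_one) (hplim 1 ⟨one_pos, le_rfl⟩)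
  rw [hrep 1 ⟨one_pos, le_rfl⟩]
  refine (((f.continuous.tendsto _).comp hY).add
    ((Kingman.tendsto_integral_psi_mul_sub hq hβ.1 hY hY₁ (fun a ha =>
      Kingman.ofReal_mul_phi_le_one hβ ha.1 ha.2 hq (hplim a ha)) f).const_mul β)).congr' ?_
  filter_upwards [Ioo_mem_nhdsLT_of_mem ⟨one_pos, le_rfl⟩] with a ha
  exact (hrep a ⟨ha.1, ha.2.le⟩).symm
end

section
/- Let u and v be Borel probability measures on [0,1] such that v_{[0,1)} ≺ u_{[0,1)}, and suppose that for some 0 ≤ a < 1 and 0 < ε < 1 one has u([0,a]) ≥ v([0,a]) + ε. Then ∫ x u(dx) ≤ (1 − ε(1−a))·∫ x v(dx). In particular, Kingman's model satisfies Assumption 2 with the constant c(a,ε) = 1/(1 − ε(1−a)) > 1: if ∫ x u(dx) > 0, then 1/∫ x u(dx) ≥ c(a,ε)·(1/∫ x v(dx)). -/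
/-!
With `g x = 1 - x`, the mean of a probability measure on `[0,1]` is `1 - ∫ g`.
On `[0,1)` the measure `u` dominates `v`, and `u` has at least `ε` more mass on
`[0,a]`, where `g ≥ 1 - a`; since `g` vanishes at `1`, the mass that `v` may put on `{1}` does not
count. Hence `∫ g du ≥ ∫ g dv + ε (1 - a)`, i.e. the mean of `u` is at most the mean of `v` minus
`ε (1 - a)`, which is at most `(1 - ε (1 - a))` times the mean of `v` because that mean is `≤ 1`.
-/

open MeasureTheory Set
open scoped ENNReal

lemma measure_le_of_restrict_le {α : Type*} [MeasurableSpace α] {μ ν : Measure α} {I S : Set α}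
    (hνμ : ν.restrict I ≤ μ.restrict I) (hSI : S ⊆ I) : ν S ≤ μ S := by
  simpa only [Measure.restrict_eq_self _ hSI] using hνμ S

lemma setLIntegral_add_mul_sub_le_of_restrict_le {α : Type*} [MeasurableSpace α]
    {μ ν : Measure α} [IsFiniteMeasure ν] {I S : Set α} {f : α → ℝ≥0∞} {c : ℝ≥0∞}
    (hνμ : ν.restrict I ≤ μ.restrict I) (hS : MeasurableSet S) (hSI : S ⊆ I)
    (hcf : ∀ x ∈ S, c ≤ f x) :
    ∫⁻ x in I, f x ∂ν + c * (μ S - ν S) ≤ ∫⁻ x in I, f x ∂μ := by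
  set w := μ.restrict I - ν.restrict I
  have hwS : w S = μ S - ν S := by
    rw [Measure.sub_apply hS hνμ, Measure.restrict_eq_self _ hSI, Measure.restrict_eq_self _ hSI]
  calc ∫⁻ x in I, f x ∂ν + c * (μ S - ν S)
      = ∫⁻ x in I, f x ∂ν + ∫⁻ x, S.indicator (fun _ ↦ c) x ∂w := by
        rw [lintegral_indicator_const hS, hwS]
    _ ≤ ∫⁻ x in I, f x ∂ν + ∫⁻ x, f x ∂w := by
        gcongr with x
        by_cases hx : x ∈ S
        · simpa [hx] using hcf x hx
        · simp [hx]
    _ = ∫⁻ x in I, f x ∂μ := by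
        rw [add_comm, ← lintegral_add_measure, Measure.sub_add_cancel_of_le hνμ]

section UnitInterval

variable {μ : Measure ℝ}

lemma integrable_id_of_ae_mem_Icc [IsFiniteMeasure μ] (hμ : ∀ᵐ x ∂μ, x ∈ Icc (0 : ℝ) 1) :
    Integrable (fun x ↦ x) μ := by
  refine Integrable.of_bound measurable_id.aestronglyMeasurable 1 (hμ.mono fun x hx ↦ ?_)
  rw [Real.norm_eq_abs, abs_le]
  exact ⟨by linarith [hx.1], hx.2⟩

lemma toReal_lintegral_ofReal_one_sub [IsProbabilityMeasure μ]
    (hμ : ∀ᵐ x ∂μ, x ∈ Icc (0 : ℝ) 1) :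
    (∫⁻ x, ENNReal.ofReal (1 - x) ∂μ).toReal = 1 - ∫ x, x ∂μ := by
  have hnonneg : 0 ≤ᵐ[μ] fun x ↦ 1 - x := hμ.mono fun x hx ↦ sub_nonneg.mpr hx.2
  rw [← integral_eq_lintegral_of_nonneg_ae hnonneg
      (measurable_const.sub measurable_id).aestronglyMeasurable,
    integral_sub (integrable_const 1) (integrable_id_of_ae_mem_Icc hμ)]
  simp

lemma integral_id_le_one [IsProbabilityMeasure μ] (hμ : ∀ᵐ x ∂μ, x ∈ Icc (0 : ℝ) 1) :
    ∫ x, x ∂μ ≤ 1 := by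
  have := toReal_lintegral_ofReal_one_sub hμ
  linarith [ENNReal.toReal_nonneg (a := ∫⁻ x, ENNReal.ofReal (1 - x) ∂μ)]

lemma lintegral_ofReal_one_sub_eq_setLIntegral_Ico (hμ : ∀ᵐ x ∂μ, x ∈ Icc (0 : ℝ) 1) :
    ∫⁻ x, ENNReal.ofReal (1 - x) ∂μ = ∫⁻ x in Ico 0 1, ENNReal.ofReal (1 - x) ∂μ := by
  rw [← lintegral_indicator measurableSet_Ico]
  refine lintegral_congr_ae (hμ.mono fun x hx ↦ ?_)
  by_cases h : x < 1
  · simp [hx.1, h]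
  · simp [show x = 1 by linarith [hx.2, not_lt.mp h]]

end UnitInterval

theorem integral_id_add_mul_le_of_restrict_Ico_le (u v : Measure ℝ)
    [IsProbabilityMeasure u] [IsProbabilityMeasure v]
    (hu : ∀ᵐ x ∂u, x ∈ Icc (0 : ℝ) 1) (hv : ∀ᵐ x ∂v, x ∈ Icc (0 : ℝ) 1)
    (hcomp : v.restrict (Ico 0 1) ≤ u.restrict (Ico 0 1)) {a : ℝ} (ha : a < 1) :
    ∫ x, x ∂u + (1 - a) * ((u (Icc 0 a)).toReal - (v (Icc 0 a)).toReal) ≤ ∫ x, x ∂v := by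
  have hSI : Icc 0 a ⊆ Ico (0 : ℝ) 1 := Icc_subset_Ico_right ha
  have hkey := setLIntegral_add_mul_sub_le_of_restrict_le hcomp measurableSet_Icc hSI
    (f := fun x ↦ ENNReal.ofReal (1 - x)) (c := ENNReal.ofReal (1 - a))
    fun x hx ↦ ENNReal.ofReal_le_ofReal (by linarith [hx.2])
  rw [← lintegral_ofReal_one_sub_eq_setLIntegral_Ico hv] at hkey
  replace hkey := hkey.trans (setLIntegral_le_lintegral _ _)
  have hu_fin : ∫⁻ x, ENNReal.ofReal (1 - x) ∂u ≠ ∞ :=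
    ((integrable_const 1).sub (integrable_id_of_ae_mem_Icc hu)).lintegral_lt_top.ne
  have hreal := ENNReal.toReal_mono hu_fin hkey
  rw [ENNReal.toReal_add (ne_top_of_le_ne_top hu_fin (le_self_add.trans hkey))
      (ENNReal.mul_ne_top ENNReal.ofReal_ne_top (ENNReal.sub_ne_top (measure_ne_top _ _))),
    ENNReal.toReal_mul, ENNReal.toReal_ofReal (by linarith),
    ENNReal.toReal_sub_of_le (measure_le_of_restrict_le hcomp hSI) (measure_ne_top _ _),
    toReal_lintegral_ofReal_one_sub hu, toReal_lintegral_ofReal_one_sub hv] at hreal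
  linarith

/-- Assumption 2 for Kingman's model. If `u`, `v` are Borel probability
measures on `[0,1]` with `v_{[0,1)} ≺ u_{[0,1)}` and `u([0,a]) ≥ v([0,a]) + ε` for some
`0 ≤ a < 1`, `0 < ε < 1`, then `∫ x u(dx) ≤ (1 - ε(1-a)) ∫ x v(dx)`; in particular
Kingman's model satisfies Assumption 2 with `c(a,ε) = (1 - ε(1-a))⁻¹ > 1`: if
`∫ x u(dx) > 0`, then `s(1,u) = 1/∫ x u(dx) ≥ c(a,ε)·(1/∫ x v(dx)) = c(a,ε)·s(1,v)`. -/
theorem stmt18 (u v : MeasureTheory.Measure ℝ)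
    [IsProbabilityMeasure u] [IsProbabilityMeasure v]
    (hu : u ((Set.Icc (0:ℝ) 1)ᶜ) = 0) (hv : v ((Set.Icc (0:ℝ) 1)ᶜ) = 0)
    (hcomp : v.restrict (Set.Ico 0 1) ≤ u.restrict (Set.Ico 0 1))
    (a ε : ℝ) (ha0 : 0 ≤ a) (ha1 : a < 1) (hε0 : 0 < ε) (hε1 : ε < 1)
    (hgap : (v (Set.Icc 0 a)).toReal + ε ≤ (u (Set.Icc 0 a)).toReal) :
    (∫ x, x ∂u) ≤ (1 - ε * (1 - a)) * (∫ x, x ∂v) ∧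
    1 < (1 - ε * (1 - a))⁻¹ ∧
    (0 < ∫ x, x ∂u →
      (1 - ε * (1 - a))⁻¹ * (1 / ∫ x, x ∂v) ≤ 1 / ∫ x, x ∂u) := by
  have hk0 : 0 < 1 - ε * (1 - a) := by nlinarith
  have hk1 : 1 - ε * (1 - a) < 1 := by nlinarith
  have hu' : ∀ᵐ x ∂u, x ∈ Icc (0 : ℝ) 1 := mem_ae_iff.mpr hu
  have hv' : ∀ᵐ x ∂v, x ∈ Icc (0 : ℝ) 1 := mem_ae_iff.mpr hv
  have hshift := integral_id_add_mul_le_of_restrict_Ico_le u v hu' hv' hcomp ha1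
  have hv_le := integral_id_le_one hv'
  have hmain : ∫ x, x ∂u ≤ (1 - ε * (1 - a)) * ∫ x, x ∂v := by nlinarith
  refine ⟨hmain, (one_lt_inv₀ hk0).mpr hk1, fun hu_pos ↦ ?_⟩
  calc (1 - ε * (1 - a))⁻¹ * (1 / ∫ x, x ∂v)
      = 1 / ((1 - ε * (1 - a)) * ∫ x, x ∂v) := by rw [one_div, one_div, mul_inv]
    _ ≤ 1 / ∫ x, x ∂u := one_div_le_one_div_of_le hu_pos hmain
end
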